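/- There exist constants δ₀ ∈ (0,1) and C ≥ 1 with the following property. Let ⟨v,w⟩ = −v⁰w⁰ + v¹w¹ + v²w² + v³w³ denote the Minkowski inner product on ℝ⁴. Let 0 < ε ≤ δ₀ and let X, Y₁, Y₂ ∈ ℝ⁴ satisfy 1/2 ≤ max_α |X^α| ≤ 2 and 1/2 ≤ max_α |Y_A^α| ≤ 2 for A = 1,2, together with |⟨X,X⟩| ≤ ε², |⟨X,Y_A⟩| ≤ ε for A = 1,2, and |⟨Y_A,Y_B⟩ − δ_{AB}| ≤ δ₀ for A,B = 1,2. Then there exist vectors L, L̲, e₁, e₂ ∈ ℝ⁴ and real coefficients γ, c_X^1, c_X^2, c_A^B (A,B = 1,2) such that ⟨L,L⟩ = ⟨L̲,L̲⟩ = 0, ⟨L,L̲⟩ = −1, ⟨L,e_A⟩ = ⟨L̲,e_A⟩ = 0, ⟨e_A,e_B⟩ = δ_{AB}, and X = L + c_X^1 e₁ + c_X^2 e₂ + γ L̲, Y_A = c_A^1 e₁ + c_A^2 e₂, with the quantitative bounds |γ| ≤ C ε², |c_X^A| ≤ C ε, and |c_A^B − δ_A^B| ≤ 1/2. -/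

import Mathlib

/-!
Gram–Schmidt turns `Y₁, Y₂` into an orthonormal spacelike pair `e₁, e₂` with `Y = c e` and `c`
close to the identity. Removing from `X` its components `⟨X, e_A⟩ = O(ε)` leaves a vector `N` in
the Lorentzian plane `{e₁, e₂}^⊥` with `⟨N, N⟩ = O(ε²)` and `‖N‖ ≥ 1/2 - O(ε)`. That plane
contains a unit timelike `T` (the projection of `(1, 0, 0, 0)`, normalised), and `N + ⟨N, T⟩ T`
is nonzero because a multiple `t T` of `T` has `⟨tT, tT⟩ = -t²`, which is not small compared with
`‖tT‖²`. Normalising it gives a unit spacelike `S ⊥ T`; then `T + S` and `T - S` are null, and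
writing `N` in this null basis gives `N = L + γ L̲` with `γ = -⟨N, N⟩ / 2`.
-/

noncomputable section

/-- The Minkowski inner product on `ℝ⁴`: `⟨v,w⟩ = -v⁰w⁰ + v¹w¹ + v²w² + v³w³`. -/
def mink (v w : Fin 4 → ℝ) : ℝ :=
  -(v 0 * w 0) + v 1 * w 1 + v 2 * w 2 + v 3 * w 3

theorem abs_sqrt_sub_one_le {x : ℝ} (hx : 0 ≤ x) : |√x - 1| ≤ |x - 1| := by
  have hfac : x - 1 = (√x - 1) * (√x + 1) := by
    nth_rw 1 [← Real.sq_sqrt hx]; ring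
  rw [hfac, abs_mul, abs_of_pos (by positivity : 0 < √x + 1)]
  nlinarith [abs_nonneg (√x - 1), Real.sqrt_nonneg x]

theorem norm_smul_add_smul_le {E : Type*} [SeminormedAddCommGroup E] [NormedSpace ℝ E]
    (a b : ℝ) {u v : E} {M : ℝ} (hu : ‖u‖ ≤ M) (hv : ‖v‖ ≤ M) :
    ‖a • u + b • v‖ ≤ (|a| + |b|) * M :=
  calc ‖a • u + b • v‖ ≤ |a| * ‖u‖ + |b| * ‖v‖ := by
        simpa only [norm_smul, Real.norm_eq_abs] using norm_add_le (a • u) (b • v)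
    _ ≤ (|a| + |b|) * M := by nlinarith [abs_nonneg a, abs_nonneg b]

namespace LinearMap.BilinForm

variable {V : Type*} [AddCommGroup V] [Module ℝ V] {B : LinearMap.BilinForm ℝ V}

theorem apply_inv_smul_inv_smul (r : ℝ) (v : V) : B (r⁻¹ • v) (r⁻¹ • v) = B v v / r ^ 2 := by
  simp only [smul_left, smul_right]; ring

theorem IsSymm.sub_div_smul_apply (hB : B.IsSymm) {u : V} (hu : B u u ≠ 0) (x : V) :
    B (x - (B u x / B u u) • u) u = 0 := by
  rw [sub_left, smul_left, hB.eq x u, div_mul_cancel₀ _ hu, sub_self]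

theorem IsSymm.sub_div_smul_self (hB : B.IsSymm) {u : V} (hu : B u u ≠ 0) (x : V) :
    B (x - (B u x / B u u) • u) (x - (B u x / B u u) • u) = B x x - B u x ^ 2 / B u u := by
  conv_lhs => rw [sub_right, smul_right, hB.sub_div_smul_apply hu, mul_zero, sub_zero]
  rw [sub_left, smul_left, hB.eq u x]
  ring

section Orthonormal

variable {ι : Type*} [DecidableEq ι]

theorem orthonormal_inv_sqrt_smul {f : ι → V} (hpos : ∀ i, 0 < B (f i) (f i))
    (horth : ∀ i j, i ≠ j → B (f i) (f j) = 0) (i j : ι) :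
    B ((√(B (f i) (f i)))⁻¹ • f i) ((√(B (f j) (f j)))⁻¹ • f j) = if i = j then 1 else 0 := by
  split_ifs with h
  · subst h
    rw [apply_inv_smul_inv_smul, Real.sq_sqrt (hpos i).le, div_self (hpos i).ne']
  · simp [horth i j h]

variable [Fintype ι] {e : ι → V}

theorem sub_sum_orthonormal_apply (he : ∀ i j, B (e i) (e j) = if i = j then 1 else 0)
    (x : V) (j : ι) : B (x - ∑ i, B x (e i) • e i) (e j) = 0 := by
  simp [he]

theorem IsSymm.sub_sum_orthonormal_self (hB : B.IsSymm)
    (he : ∀ i j, B (e i) (e j) = if i = j then 1 else 0) (x : V) :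
    B (x - ∑ i, B x (e i) • e i) (x - ∑ i, B x (e i) • e i) = B x x - ∑ i, B x (e i) ^ 2 := by
  conv_lhs => rw [sub_right, sum_right]
  simp only [smul_right, sub_sum_orthonormal_apply he, mul_zero, Finset.sum_const_zero, sub_zero,
    sub_left, sum_left, smul_left, hB.eq (e _) x, sq]

end Orthonormal

theorem IsSymm.exists_orthonormal_triangular_of_gram_near_one (hB : B.IsSymm) (Y : Fin 2 → V)
    (hY : ∀ A C, |B (Y A) (Y C) - if A = C then 1 else 0| ≤ 1 / 1000) :
    ∃ (e : Fin 2 → V) (r q ρ : ℝ), (∀ A C, B (e A) (e C) = if A = C then 1 else 0) ∧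
      Y 0 = r • e 0 ∧ Y 1 = (q * r) • e 0 + ρ • e 1 ∧
      |r - 1| ≤ 1 / 1000 ∧ |q| ≤ 1 / 999 ∧ |ρ - 1| ≤ 1 / 500 := by
  simp only [Fin.forall_fin_two, Fin.isValue, if_true, one_ne_zero, zero_ne_one, if_false,
    sub_zero] at hY
  obtain ⟨⟨h₀₀, h₀₁⟩, -, h₁₁⟩ := hY
  have hg₀₀ : 0 < B (Y 0) (Y 0) := by linarith [(abs_le.1 h₀₀).1]
  set q := B (Y 0) (Y 1) / B (Y 0) (Y 0) with hq_def
  set Z := Y 1 - q • Y 0 with hZ_def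
  have hq : |q| ≤ 1 / 999 := by
    rw [hq_def, abs_div, abs_of_pos hg₀₀, div_le_iff₀ hg₀₀]
    linarith [(abs_le.1 h₀₀).1]
  have hZZ : |B Z Z - 1| ≤ 1 / 500 := by
    have hqg : |q * B (Y 0) (Y 1)| ≤ 1 / 999 * (1 / 1000) := by
      rw [abs_mul]; exact mul_le_mul hq h₀₁ (abs_nonneg _) (by norm_num)
    rw [hB.sub_div_smul_self hg₀₀.ne', show B (Y 1) (Y 1) - B (Y 0) (Y 1) ^ 2 / B (Y 0) (Y 0) - 1
      = (B (Y 1) (Y 1) - 1) - q * B (Y 0) (Y 1) by ring]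
    linarith [abs_sub (B (Y 1) (Y 1) - 1) (q * B (Y 0) (Y 1))]
  have hZZ_pos : 0 < B Z Z := by linarith [(abs_le.1 hZZ).1]
  have hZY : B Z (Y 0) = 0 := hB.sub_div_smul_apply hg₀₀.ne' (Y 1)
  have hr_pos : 0 < √(B (Y 0) (Y 0)) := Real.sqrt_pos.2 hg₀₀
  refine ⟨_, √(B (Y 0) (Y 0)), q, √(B Z Z), orthonormal_inv_sqrt_smul (f := ![Y 0, Z])
    (by simp [Fin.forall_fin_two, hg₀₀, hZZ_pos])
    (by simp [Fin.forall_fin_two, hB.eq (Y 0) Z, hZY]),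
    ?_, ?_, (abs_sqrt_sub_one_le hg₀₀.le).trans h₀₀, hq, (abs_sqrt_sub_one_le hZZ_pos.le).trans hZZ⟩
  · simp [smul_inv_smul₀ hr_pos.ne']
  · simp only [Fin.isValue, Matrix.cons_val_zero, Matrix.cons_val_one]
    rw [mul_smul, smul_inv_smul₀ hr_pos.ne', smul_inv_smul₀ (Real.sqrt_pos.2 hZZ_pos).ne', hZ_def]
    abel

theorem IsSymm.exists_orthonormal_of_gram_near_one (hB : B.IsSymm) (Y : Fin 2 → V)
    (hY : ∀ A C, |B (Y A) (Y C) - if A = C then 1 else 0| ≤ 1 / 1000) :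
    ∃ (e : Fin 2 → V) (c d : Fin 2 → Fin 2 → ℝ),
      (∀ A C, B (e A) (e C) = if A = C then 1 else 0) ∧
      (∀ A, Y A = c A 0 • e 0 + c A 1 • e 1) ∧ (∀ A, e A = d A 0 • Y 0 + d A 1 • Y 1) ∧
      (∀ A C, |c A C - if A = C then 1 else 0| ≤ 1 / 2) ∧ (∀ A, |d A 0| + |d A 1| ≤ 21 / 20) := by
  obtain ⟨e, r, q, ρ, he, hY₀, hY₁, hr, hq, hρ⟩ :=
    hB.exists_orthonormal_triangular_of_gram_near_one Y hY
  have hr_pos : 0 < r := by linarith [(abs_le.1 hr).1]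
  have hρ_pos : 0 < ρ := by linarith [(abs_le.1 hρ).1]
  refine ⟨e, ![![r, 0], ![q * r, ρ]], ![![r⁻¹, 0], ![-(ρ⁻¹ * q), ρ⁻¹]], he, ?_, ?_, ?_, ?_⟩ <;>
    simp only [Fin.forall_fin_two, Fin.isValue, Matrix.cons_val_zero, Matrix.cons_val_one,
      if_true, one_ne_zero, zero_ne_one, if_false]
  · exact ⟨by rw [hY₀, zero_smul, add_zero], hY₁⟩
  · refine ⟨by rw [hY₀, zero_smul, add_zero, inv_smul_smul₀ hr_pos.ne'], ?_⟩
    rw [hY₀, hY₁]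
    match_scalars
    · field_simp
    · field_simp; ring
  · refine ⟨⟨by linarith, by norm_num⟩, ?_, by linarith⟩
    rw [sub_zero, abs_mul, abs_of_pos hr_pos]
    nlinarith [abs_nonneg q, (abs_le.1 hr).2]
  · have hd : |-(ρ⁻¹ * q)| + |ρ⁻¹| = (|q| + 1) / ρ := by
      rw [abs_neg, abs_mul, abs_inv, abs_of_pos hρ_pos]; ring
    rw [abs_zero, add_zero, abs_inv, abs_of_pos hr_pos, inv_le_comm₀ hr_pos (by norm_num), hd,
      div_le_iff₀ hρ_pos]
    constructor <;> linarith [(abs_le.1 hr).1, (abs_le.1 hρ).1]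

theorem IsSymm.exists_null_decomposition_of_null_pair (hB : B.IsSymm) {W : Submodule ℝ V}
    {p m : V} (hp : p ∈ W) (hm : m ∈ W) (hpp : B p p = 0) (hmm : B m m = 0) (hpm : B p m = -1)
    {u v : ℝ} (huv : u ≠ 0 ∨ v ≠ 0) :
    ∃ L ∈ W, ∃ Lb ∈ W, B L L = 0 ∧ B Lb Lb = 0 ∧ B L Lb = -1 ∧
      u • p + v • m = L + (u * v) • Lb := by
  by_cases hu : u = 0
  · have hv : v ≠ 0 := huv.resolve_left (not_not.mpr hu)
    refine ⟨v • m, W.smul_mem v hm, v⁻¹ • p, W.smul_mem _ hp, ?_, ?_, ?_, ?_⟩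
    · simp [hmm]
    · simp [hpp]
    · simp [hB.eq m p, hpm, inv_mul_cancel₀ hv]
    · simp [hu]
  · refine ⟨u • p, W.smul_mem u hp, u⁻¹ • m, W.smul_mem _ hm, ?_, ?_, ?_, ?_⟩
    · simp [hpp]
    · simp [hmm]
    · simp [hpm, inv_mul_cancel₀ hu]
    · rw [mul_comm, mul_smul, smul_inv_smul₀ hu]

theorem IsSymm.exists_null_decomposition (hB : B.IsSymm) {W : Submodule ℝ V} {T S : V}
    (hT : T ∈ W) (hS : S ∈ W) (hTT : B T T = -1) (hSS : B S S = 1) (hTS : B T S = 0)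
    {a b : ℝ} (hab : a ≠ 0 ∨ b ≠ 0) :
    ∃ L ∈ W, ∃ Lb ∈ W, B L L = 0 ∧ B Lb Lb = 0 ∧ B L Lb = -1 ∧
      a • T + b • S = L + ((a ^ 2 - b ^ 2) / 2) • Lb := by
  have hST : B S T = 0 := by rw [hB.eq, hTS]
  have huv : (a + b) / 2 ≠ 0 ∨ a - b ≠ 0 := by
    by_contra! h
    rcases hab with ha | hb
    · exact ha (by linarith)
    · exact hb (by linarith)
  obtain ⟨L, hL, Lb, hLb, hLL, hLbLb, hLLb, hdec⟩ :=
    hB.exists_null_decomposition_of_null_pair (p := T + S) (m := (1 / 2 : ℝ) • (T - S))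
      (W.add_mem hT hS) (W.smul_mem _ (W.sub_mem hT hS))
      (by simp only [add_left, add_right, hTT, hSS, hTS, hST]; ring)
      (by simp only [smul_left, smul_right, sub_left, sub_right, hTT, hSS, hTS, hST]; ring)
      (by simp only [smul_right, add_left, sub_right, hTT, hSS, hTS, hST]; ring) huv
  refine ⟨L, hL, Lb, hLb, hLL, hLbLb, hLLb, ?_⟩
  rw [show (a ^ 2 - b ^ 2) / 2 = (a + b) / 2 * (a - b) by ring, ← hdec]
  module

end LinearMap.BilinForm

open LinearMap.BilinForm

def minkowski : LinearMap.BilinForm ℝ (Fin 4 → ℝ) :=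
  LinearMap.mk₂ ℝ mink (fun _ _ _ => by simp only [mink, Pi.add_apply]; ring)
    (fun _ _ _ => by simp only [mink, Pi.smul_apply, smul_eq_mul]; ring)
    (fun _ _ _ => by simp only [mink, Pi.add_apply]; ring)
    (fun _ _ _ => by simp only [mink, Pi.smul_apply, smul_eq_mul]; ring)

theorem minkowski_apply (v w : Fin 4 → ℝ) : minkowski v w = mink v w := rfl

theorem minkowski_isSymm : minkowski.IsSymm :=
  ⟨fun v w => by simp only [minkowski_apply, mink]; ring⟩

theorem mink_self_pos_of_orthogonal_timelike {T v : Fin 4 → ℝ} (hT : mink T T < 0)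
    (hvT : mink v T = 0) (hv : v ≠ 0) : 0 < mink v v := by
  simp only [mink] at *
  by_contra! h
  apply hv
  have cauchy_schwarz : (v 0 * T 0) ^ 2 ≤
      (v 1 ^ 2 + v 2 ^ 2 + v 3 ^ 2) * (T 1 ^ 2 + T 2 ^ 2 + T 3 ^ 2) := by
    rw [show v 0 * T 0 = v 1 * T 1 + v 2 * T 2 + v 3 * T 3 by linarith]
    nlinarith [sq_nonneg (v 1 * T 2 - v 2 * T 1), sq_nonneg (v 1 * T 3 - v 3 * T 1),
      sq_nonneg (v 2 * T 3 - v 3 * T 2)]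
  have hv₀ : v 0 = 0 := by
    have : v 0 ^ 2 * (T 0 ^ 2 - (T 1 ^ 2 + T 2 ^ 2 + T 3 ^ 2)) ≤ 0 := by
      nlinarith [sq_nonneg (T 1), sq_nonneg (T 2), sq_nonneg (T 3)]
    exact pow_eq_zero_iff two_ne_zero |>.1 <| le_antisymm
      (nonpos_of_mul_nonpos_left this (by linarith)) (sq_nonneg _)
  have : v 1 = 0 ∧ v 2 = 0 ∧ v 3 = 0 := by
    refine ⟨?_, ?_, ?_⟩ <;> nlinarith [sq_nonneg (v 1), sq_nonneg (v 2), sq_nonneg (v 3)]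
  funext i; fin_cases i <;> simp [hv₀, this]

theorem exists_timelike_orthogonal {ι : Type*} [Fintype ι] [DecidableEq ι]
    {e : ι → Fin 4 → ℝ} (he : ∀ i j, mink (e i) (e j) = if i = j then 1 else 0) :
    ∃ T, mink T T ≤ -1 ∧ (∀ i, mink T (e i) = 0) ∧ ‖T‖ ≤ 1 + ∑ i, ‖e i‖ ^ 2 := by
  set t₀ : Fin 4 → ℝ := Pi.single 0 1
  have ht₀ : ∀ v, mink t₀ v = -v 0 := fun v => by simp [t₀, mink]
  have hTT := minkowski_isSymm.sub_sum_orthonormal_self he t₀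
  have hTe := sub_sum_orthonormal_apply (B := minkowski) he t₀
  simp only [minkowski_apply, ht₀, neg_sq] at hTT hTe
  refine ⟨_, ?_, hTe, ?_⟩
  · rw [hTT]
    linarith [Finset.sum_nonneg fun i (_ : i ∈ Finset.univ) => sq_nonneg (e i 0),
      show t₀ 0 = 1 by simp [t₀]]
  · calc _ ≤ ‖t₀‖ + ∑ i, ‖(-e i 0) • e i‖ :=
          (norm_sub_le _ _).trans (by gcongr; exact norm_sum_le _ _)
      _ ≤ 1 + ∑ i, ‖e i‖ ^ 2 := by
          gcongr with i
          · simp [t₀, Pi.norm_single]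
          · rw [norm_smul, norm_neg, sq]
            exact mul_le_mul_of_nonneg_right (norm_le_pi_norm _ _) (norm_nonneg _)

theorem exists_unit_timelike_orthogonal {ι : Type*} [Fintype ι] [DecidableEq ι]
    {e : ι → Fin 4 → ℝ} (he : ∀ i j, mink (e i) (e j) = if i = j then 1 else 0) :
    ∃ T, mink T T = -1 ∧ (∀ i, mink T (e i) = 0) ∧ ‖T‖ ≤ 1 + ∑ i, ‖e i‖ ^ 2 := by
  obtain ⟨T, hTT, hTe, hT⟩ := exists_timelike_orthogonal he
  have hτ : 1 ≤ √(-mink T T) := Real.one_le_sqrt.2 (by linarith)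
  refine ⟨(√(-mink T T))⁻¹ • T, ?_, fun i => ?_, ?_⟩
  · rw [← minkowski_apply, apply_inv_smul_inv_smul, Real.sq_sqrt (by linarith), minkowski_apply,
      div_neg_self (by linarith)]
  · rw [← minkowski_apply, smul_left, minkowski_apply, hTe, mul_zero]
  · refine le_trans ?_ hT
    rw [norm_smul, norm_inv, Real.norm_of_nonneg (by linarith)]
    exact mul_le_of_le_one_left (norm_nonneg _) (inv_le_one_of_one_le₀ hτ)

theorem exists_null_decomposition_of_nearly_null {W : Submodule ℝ (Fin 4 → ℝ)}
    {T N : Fin 4 → ℝ} {K : ℝ} (hTW : T ∈ W) (hNW : N ∈ W) (hTT : mink T T = -1) (hT : ‖T‖ ≤ K)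
    (hN : K ^ 2 * |mink N N| < ‖N‖ ^ 2) :
    ∃ L ∈ W, ∃ Lb ∈ W, mink L L = 0 ∧ mink Lb Lb = 0 ∧ mink L Lb = -1 ∧
      N = L + (-(mink N N / 2)) • Lb := by
  have hTT' : minkowski T T ≠ 0 := by rw [minkowski_apply, hTT]; norm_num
  set t := mink T N / mink T T
  set S := N - t • T with hS
  have hST : mink S T = 0 := minkowski_isSymm.sub_div_smul_apply hTT' N
  have hSS : mink S S = mink N N + mink T N ^ 2 := by
    rw [show mink S S = _ from minkowski_isSymm.sub_div_smul_self hTT' N]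
    simp only [minkowski_apply, hTT]; ring
  have hS0 : S ≠ 0 := by
    intro h
    have hN_eq : N = t • T := by rwa [hS, sub_eq_zero] at h
    have hNN : mink N N = -t ^ 2 := by
      rw [hN_eq, ← minkowski_apply]
      simp only [smul_left, smul_right, minkowski_apply, hTT]; ring
    have hnorm : ‖N‖ ≤ |t| * K := by
      rw [hN_eq, norm_smul, Real.norm_eq_abs]
      exact mul_le_mul_of_nonneg_left hT (abs_nonneg t)
    rw [hNN, abs_neg, abs_sq] at hN
    nlinarith [norm_nonneg N, abs_nonneg t, sq_abs t]
  have hs := mink_self_pos_of_orthogonal_timelike (by rw [hTT]; norm_num) hST hS0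
  set s := √(mink S S)
  have hs_pos : 0 < s := Real.sqrt_pos.2 hs
  obtain ⟨L, hL, Lb, hLb, hLL, hLbLb, hLLb, hdec⟩ :=
    minkowski_isSymm.exists_null_decomposition (T := T) (S := s⁻¹ • S) (a := t) (b := s) hTW
      (W.smul_mem _ (W.sub_mem hNW (W.smul_mem _ hTW))) hTT
      (by rw [apply_inv_smul_inv_smul, Real.sq_sqrt hs.le, minkowski_apply, div_self hs.ne'])
      (by rw [smul_right, minkowski_isSymm.eq, minkowski_apply, hST, mul_zero])
      (Or.inr hs_pos.ne')
  refine ⟨L, hL, Lb, hLb, hLL, hLbLb, hLLb, ?_⟩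
  rw [show -(mink N N / 2) = (t ^ 2 - s ^ 2) / 2 by
    rw [Real.sq_sqrt hs.le, hSS]; simp only [t, hTT]; ring, ← hdec, smul_inv_smul₀ hs_pos.ne', hS]
  abel

theorem exists_null_frame_of_nearly_null {ε : ℝ} (hεδ : ε ≤ 1 / 1000)
    {e : Fin 2 → Fin 4 → ℝ} (he : ∀ A C, mink (e A) (e C) = if A = C then 1 else 0)
    (he_norm : ∀ A, ‖e A‖ ≤ 21 / 10) {X : Fin 4 → ℝ} (hX : 1 / 2 ≤ ‖X‖)
    (hXX : |mink X X| ≤ ε ^ 2) (hXe : ∀ A, |mink X (e A)| ≤ 2 * ε) :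
    ∃ L Lb γ, mink L L = 0 ∧ mink Lb Lb = 0 ∧ mink L Lb = -1 ∧
      (∀ A, mink L (e A) = 0 ∧ mink Lb (e A) = 0) ∧
      X = L + mink X (e 0) • e 0 + mink X (e 1) • e 1 + γ • Lb ∧ |γ| ≤ 10 * ε ^ 2 := by
  obtain ⟨T, hTT, hTe, hT⟩ := exists_unit_timelike_orthogonal he
  set W := ⨅ A, LinearMap.ker (minkowski.flip (e A))
  have mem_W : ∀ v, v ∈ W ↔ ∀ A, mink v (e A) = 0 := by simp [W, minkowski_apply]
  have hNe := sub_sum_orthonormal_apply (B := minkowski) he X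
  have hNN := minkowski_isSymm.sub_sum_orthonormal_self he X
  simp only [minkowski_apply, Fin.sum_univ_two] at hNe hNN
  set N := X - (mink X (e 0) • e 0 + mink X (e 1) • e 1) with hN
  have hNN_le : |mink N N| ≤ 9 * ε ^ 2 := by
    have hc : ∀ A, mink X (e A) ^ 2 ≤ (2 * ε) ^ 2 := fun A =>
      sq_le_sq' (abs_le.1 (hXe A)).1 (abs_le.1 (hXe A)).2
    rw [hNN, abs_le]
    constructor <;> nlinarith [abs_le.1 hXX, sq_nonneg (mink X (e 0)), sq_nonneg (mink X (e 1)),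
      hc 0, hc 1]
  have hN_norm : 49 / 100 ≤ ‖N‖ := by
    have := norm_smul_add_smul_le (mink X (e 0)) (mink X (e 1)) (he_norm 0) (he_norm 1)
    nlinarith [norm_sub_norm_le X (mink X (e 0) • e 0 + mink X (e 1) • e 1), hXe 0, hXe 1]
  have hT_norm : ‖T‖ ≤ 10 := by
    rw [Fin.sum_univ_two] at hT
    nlinarith [he_norm 0, he_norm 1, norm_nonneg (e 0), norm_nonneg (e 1)]
  obtain ⟨L, hL, Lb, hLb, hLL, hLbLb, hLLb, hNL⟩ :=
    exists_null_decomposition_of_nearly_null ((mem_W T).2 hTe) ((mem_W N).2 hNe) hTT hT_norm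
      (by nlinarith [abs_nonneg (mink X (e 0)), hXe 0])
  refine ⟨L, Lb, -(mink N N / 2), hLL, hLbLb, hLLb,
    fun A => ⟨(mem_W L).1 hL A, (mem_W Lb).1 hLb A⟩, ?_, ?_⟩
  · linear_combination (norm := module) hNL - hN
  · rw [abs_neg, abs_div, abs_two]; linarith [sq_nonneg ε]

/-- the approximate null frame lemma. -/
theorem approximate_null_frame :
    ∃ δ₀ : ℝ, 0 < δ₀ ∧ δ₀ < 1 ∧ ∃ C : ℝ, 1 ≤ C ∧
      ∀ ε : ℝ, 0 < ε → ε ≤ δ₀ →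
      ∀ (X : Fin 4 → ℝ) (Y : Fin 2 → Fin 4 → ℝ),
        ((∃ α, (1:ℝ)/2 ≤ |X α|) ∧ (∀ α, |X α| ≤ 2)) →
        (∀ A : Fin 2, (∃ α, (1:ℝ)/2 ≤ |Y A α|) ∧ (∀ α, |Y A α| ≤ 2)) →
        |mink X X| ≤ ε ^ 2 →
        (∀ A : Fin 2, |mink X (Y A)| ≤ ε) →
        (∀ A B : Fin 2, |mink (Y A) (Y B) - (if A = B then (1:ℝ) else 0)| ≤ δ₀) →
        ∃ (L Lb : Fin 4 → ℝ) (e : Fin 2 → Fin 4 → ℝ)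
          (γ : ℝ) (cX : Fin 2 → ℝ) (c : Fin 2 → Fin 2 → ℝ),
          mink L L = 0 ∧ mink Lb Lb = 0 ∧ mink L Lb = -1 ∧
          (∀ A : Fin 2, mink L (e A) = 0 ∧ mink Lb (e A) = 0) ∧
          (∀ A B : Fin 2, mink (e A) (e B) = (if A = B then (1:ℝ) else 0)) ∧
          X = L + cX 0 • e 0 + cX 1 • e 1 + γ • Lb ∧
          (∀ A : Fin 2, Y A = c A 0 • e 0 + c A 1 • e 1) ∧
          |γ| ≤ C * ε ^ 2 ∧ (∀ A : Fin 2, |cX A| ≤ C * ε) ∧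
          (∀ A B : Fin 2, |c A B - (if A = B then (1:ℝ) else 0)| ≤ 1/2) := by
  refine ⟨1 / 1000, by norm_num, by norm_num, 10, by norm_num, ?_⟩
  intro ε hε hεδ X Y hX hY hXX hXY hYY
  obtain ⟨e, c, d, he, hYe, heY, hc, hd⟩ :=
    minkowski_isSymm.exists_orthonormal_of_gram_near_one Y hYY
  have hY_norm : ∀ A, ‖Y A‖ ≤ 2 := fun A => (pi_norm_le_iff_of_nonneg (by norm_num)).2
    fun α => (Real.norm_eq_abs _).trans_le ((hY A).2 α)
  have he_norm : ∀ A, ‖e A‖ ≤ 21 / 10 := fun A => by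
    rw [heY A]
    nlinarith [norm_smul_add_smul_le (d A 0) (d A 1) (hY_norm 0) (hY_norm 1), hd A]
  have hXe : ∀ A, |mink X (e A)| ≤ 2 * ε := fun A => by
    have h := norm_smul_add_smul_le (d A 0) (d A 1) ((Real.norm_eq_abs _).trans_le (hXY 0))
      ((Real.norm_eq_abs _).trans_le (hXY 1))
    rw [heY A, ← minkowski_apply, add_right, smul_right, smul_right]
    simp only [minkowski_apply, smul_eq_mul, Real.norm_eq_abs] at h ⊢
    nlinarith [hd A]
  obtain ⟨α, hα⟩ := hX.1
  obtain ⟨L, Lb, γ, hLL, hLbLb, hLLb, hLe, hXdec, hγ⟩ :=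
    exists_null_frame_of_nearly_null hεδ he he_norm (hα.trans (norm_le_pi_norm X α)) hXX hXe
  exact ⟨L, Lb, e, γ, fun A => mink X (e A), c, hLL, hLbLb, hLLb, hLe, he, hXdec, hYe, hγ,
    fun A => (hXe A).trans (by linarith), hc⟩
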